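/- arXiv:1005.5120 — 3 statements merged into one kernel-verified Lean document; each statement's English description precedes it below -/
import Mathlib

section
/- Define Υ ∈ Mat_r(K^sep[[t]]) by Υ_{ij} = f_i^{(j−1)}, where f^{(n)} denotes the n-fold twist Σ a_i^{q^n} t^i of f = Σ a_i t^i. Then for every ε ∈ Gal(K^sep/K), one has ε(Υ^{(1)}) = g_ε·Υ^{(1)}, where ε acts entrywise and coefficientwise. -/
/-!
By the Tate-module description of `g_ε`, `ε` sends the Anderson generating function `f_i` to
`∑ₛ (g_ε)ᵢₛ fₛ`. Since the twist is the coefficientwise `qⁿ`-power Frobenius, it commutes with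
the automorphism `ε`, is a ring endomorphism of `K^sep[[t]]` in characteristic `p`, and fixes
the entries of `g_ε`, whose coefficients lie in `𝔽_q`. Twisting the first identity therefore
gives the claim.
-/

noncomputable section
open scoped BigOperators

/-- The `n`-fold twist `f^{(n)} = ∑ aᵢ^{qⁿ} tⁱ` of a power series `f = ∑ aᵢ tⁱ`. -/
def twistPS {L : Type*} [CommRing L] (q n : ℕ) (f : PowerSeries L) : PowerSeries L :=
  PowerSeries.mk fun m => (PowerSeries.coeff m f) ^ q ^ n

/-- Coefficientwise action of a ring automorphism on a power series. -/
def mapAut {L : Type*} [CommRing L] (ε : L ≃+* L) (f : PowerSeries L) : PowerSeries L :=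
  PowerSeries.mk fun m => ε (PowerSeries.coeff m f)

namespace PowerSeries

variable {L : Type*} [CommRing L]

theorem twistPS_eq_map_iterateFrobenius (p e n : ℕ) [ExpChar L p] (f : L⟦X⟧) :
    twistPS (p ^ e) n f = map (iterateFrobenius L p (e * n)) f := by
  ext m
  simp [twistPS, iterateFrobenius_def, pow_mul]

theorem twistPS_eq_self {q : ℕ} (n : ℕ) {f : L⟦X⟧} (hf : ∀ m, coeff m f ^ q = coeff m f) :
    twistPS q n f = f := by
  ext m
  induction n with
  | zero => simp [twistPS]
  | succ n ih =>
    simp only [twistPS, coeff_mk] at ih ⊢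
    rw [pow_succ, pow_mul, ih, hf]

theorem mapAut_twistPS (ε : L ≃+* L) (q n : ℕ) (f : L⟦X⟧) :
    mapAut ε (twistPS q n f) = twistPS q n (mapAut ε f) := by
  ext m
  simp [mapAut, twistPS]

theorem mapAut_mk_eq_sum_mul {ι : Type*} [Fintype ι] (ε : L ≃+* L) (b : ℕ → L)
    (a : ι → ℕ → L) (c : ι → L⟦X⟧)
    (h : ∀ m, ε (b m) = ∑ s, ∑ j ∈ Finset.range (m + 1), coeff j (c s) * a s (m - j)) :
    mapAut ε (mk b) = ∑ s, c s * mk (a s) := by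
  ext m
  simp [mapAut, h, coeff_mul, Finset.Nat.sum_antidiagonal_eq_sum_range_succ_mk]

end PowerSeries

theorem statement4
    -- q a power of the prime p
    (p mq q : ℕ) (hp : p.Prime) (hq : q = p ^ mq)
    -- ℂ∞ ⊇ k̄ ⊇ K^sep ⊇ K
    (Cinf : Type) [Field Cinf] [CharP Cinf p]
    -- the rank r Drinfeld 𝔽q[t]-module ρ_t = θ + κ₁τ + ⋯ + κ_r τ^r, κ_r ≠ 0,
    -- defined over K
    (r : ℕ)
    (θ : Cinf)
    -- the exponential function exp_ρ
    (expρ : Cinf → Cinf)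
    -- ω₁, …, ω_r : an A-basis of the period lattice Λ_ρ = ker exp_ρ
    (ω : Fin r → Cinf)
    -- K and K^sep
    (Ksep : Subfield Cinf)
    (hξ : ∀ (i : Fin r) (m : ℕ), expρ (ω i / θ ^ (m + 1)) ∈ Ksep)
    -- ε ∈ Gal(K^sep/K)
    (ε : ↥Ksep ≃+* ↥Ksep)
    -- g_ε ∈ GL_r(𝔽q[[t]])
    (g : Matrix (Fin r) (Fin r) (PowerSeries ↥Ksep))
    (hgFq : ∀ i s m, (PowerSeries.coeff m (g i s)) ^ q = PowerSeries.coeff m (g i s))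
    (htate : ∀ (i : Fin r) (m : ℕ),
      ε ⟨expρ (ω i / θ ^ (m + 1)), hξ i m⟩ =
        ∑ s, ∑ j ∈ Finset.range (m + 1),
          (PowerSeries.coeff j (g i s)) * ⟨expρ (ω s / θ ^ (m - j + 1)), hξ s (m - j)⟩) :
    -- conclusion : ε(Υ^{(1)}) = g_ε Υ^{(1)}, where Υ_{ij} = f_i^{(j−1)} and
    -- f_i = ∑_m ξ_{i,m} t^m is the i-th Anderson generating function
    ∀ i j : Fin r,
      mapAut ε (twistPS q (j.1 + 1)
          (PowerSeries.mk (fun m => (⟨expρ (ω i / θ ^ (m + 1)), hξ i m⟩ : ↥Ksep)))) =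
        ∑ s, g i s * twistPS q (j.1 + 1)
          (PowerSeries.mk (fun m => (⟨expρ (ω s / θ ^ (m + 1)), hξ s m⟩ : ↥Ksep))) := by
  have : Fact p.Prime := ⟨hp⟩
  subst hq
  intro i j
  set f : Fin r → PowerSeries Ksep :=
    fun s => PowerSeries.mk fun m => ⟨expρ (ω s / θ ^ (m + 1)), hξ s m⟩
  have hεf : mapAut ε (f i) = ∑ s, g i s * f s :=
    PowerSeries.mapAut_mk_eq_sum_mul ε _ _ (g i) (htate i)
  calc mapAut ε (twistPS (p ^ mq) (j + 1) (f i))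
      = twistPS (p ^ mq) (j + 1) (∑ s, g i s * f s) := by
        rw [PowerSeries.mapAut_twistPS, hεf]
    _ = ∑ s, twistPS (p ^ mq) (j + 1) (g i s) * twistPS (p ^ mq) (j + 1) (f s) := by
        simp only [PowerSeries.twistPS_eq_map_iterateFrobenius, map_sum, map_mul]
    _ = ∑ s, g i s * twistPS (p ^ mq) (j + 1) (f s) := by
        simp only [PowerSeries.twistPS_eq_self _ (hgFq i _)]
end
end

section
/- For a Drinfeld 𝔽_q[t]-module ρ of rank r defined over k̄, the pre-t-motive M_ρ is a simple left k̄(t)[σ,σ^{−1}]-module. -/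
/-!
Statement 5 (Chang–Papanikolas, Corollary 2.5.2 / 3.3.3): For a Drinfeld 𝔽q[t]-module ρ of
rank r defined over k̄ (with ρ_t = θ + κ₁τ + ⋯ + κ_rτ^r, κ_r = 1), the pre-t-motive M_ρ is a
simple left k̄(t)[σ,σ^{-1}]-module.

M_ρ is the r-dimensional k̄(t)-vector space with σ acting on the standard basis 𝐦 by
σ𝐦 = Φ_ρ𝐦 and σ(c x) = c^{(-1)} σ(x); in coordinates σ sends the coordinate vector v of x
to Φ_ρᵀ · (σ_K v), where σ_K is the inverse-twisting automorphism f ↦ f^{(-1)} of k̄(t).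
Simplicity is expressed as: every k̄(t)-subspace W with σ(W) = W is 0 or everything
(a σ-stable subspace is exactly a k̄(t)[σ,σ^{-1}]-submodule).
-/

noncomputable section
open scoped BigOperators

/-- The matrix `Φ_ρ` of the `σ`-action on the pre-t-motive `M_ρ` of a Drinfeld module with
`ρ_t = θ + κ₁τ + ⋯ + κ_{r}τ^{r}`, `κ_r = 1`:  superdiagonal `1`'s, last row
`((t−θ), −κ₁^{(−1)}, …, −κ_{r−1}^{(−r+1)})`.  Here `κtw j` is the `(j+1)`-fold inverse twist
`κ_{j+1}^{(−(j+1))}` of `κ_{j+1}`. -/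
def PhiRho {Kb : Type*} [Field Kb] (r : ℕ) (θ : Kb) (κtw : Fin r → Kb) :
    Matrix (Fin r) (Fin r) (RatFunc Kb) := fun i j =>
  if i.1 + 1 = j.1 then 1
  else if i.1 = r - 1 then
    (if j.1 = 0 then RatFunc.X - RatFunc.C θ
     else - RatFunc.C (κtw ⟨j.1 - 1, lt_of_le_of_lt (Nat.sub_le _ _) j.2⟩))
  else 0

/-!
Measure `v ∈ K(t)^(n+1)` by `max_i |v_i|^(n+1) · e^i`, where `|·|` is the valuation at
infinity; on the logarithmic scale this is `max_i ((n+1) deg v_i + i)`. The automorphism `σ`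
preserves `|·|` because it undoes a twist of coefficients, and `Φ_ρᵀ` moves coordinate `i` to
`i+1`, wrapping the last coordinate around with the factor `t - θ`; the `κ`-terms only see the
last coordinate at a smaller index and never dominate. Hence `σ` multiplies the size of every
vector by exactly `e`. For `w ≠ 0` in a `σ`-stable subspace, `w, σw, …, σⁿw` then have
log-sizes `d, d+1, …, d+n`, while scalars change log-sizes by multiples of `n+1`. So all terms
of a nontrivial linear combination of them have distinct sizes, the combination cannot vanish,
and these `n+1` vectors span.
-/

namespace DrinfeldPreTMotive

open RatFunc WithZero Finset
open scoped Polynomial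

variable {K : Type*} [Field K]

lemma one_lt_exp_one : (1 : ℤᵐ⁰) < exp 1 := by
  simp [← exp_zero]

section Valuation

variable [DecidableEq (RatFunc K)]

lemma inftyValuation_algebraMap_map (φ : K →+* K) (f : K[X]) :
    inftyValuation K (algebraMap K[X] (RatFunc K) (f.map φ)) =
      inftyValuation K (algebraMap K[X] (RatFunc K) f) := by
  rcases eq_or_ne f 0 with rfl | hf
  · simp
  rw [inftyValuation_apply, inftyValuation_apply,
    inftyValuation.polynomial _ ((Polynomial.map_ne_zero_iff φ.injective).2 hf),
    inftyValuation.polynomial _ hf, Polynomial.natDegree_map_eq_of_injective φ.injective]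

lemma inftyValuation_apply_of_map_eq {φ : K →+* K} {σ : RatFunc K ≃+* RatFunc K}
    (hσ : ∀ f : K[X],
      σ (algebraMap K[X] (RatFunc K) (f.map φ)) = algebraMap K[X] (RatFunc K) f)
    (x : RatFunc K) : inftyValuation K (σ x) = inftyValuation K x := by
  have hsymm (f : K[X]) :
      σ.symm (algebraMap K[X] (RatFunc K) f) = algebraMap K[X] (RatFunc K) (f.map φ) :=
    σ.symm_apply_eq.2 (hσ f).symm
  have hinv (y : RatFunc K) : inftyValuation K (σ.symm y) = inftyValuation K y := by
    rw [← num_div_denom y, map_div₀, hsymm, hsymm, map_div₀, map_div₀,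
      inftyValuation_algebraMap_map, inftyValuation_algebraMap_map]
  simpa using (hinv (σ x)).symm

lemma inftyValuation_X_sub_C (θ : K) : inftyValuation K (X - C θ) = exp 1 := by
  rw [← algebraMap_X, ← algebraMap_C, ← map_sub, inftyValuation_apply,
    inftyValuation.polynomial _ (Polynomial.X_sub_C_ne_zero θ), Polynomial.natDegree_X_sub_C,
    Nat.cast_one]

lemma inftyValuation_C_le_one (a : K) : inftyValuation K (C a) ≤ 1 := by
  rcases eq_or_ne a 0 with rfl | ha
  · simp
  · exact (inftyValuation.C K ha).le

end Valuation

section Action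

variable {n : ℕ} (θ : K) (κtw : Fin (n + 1) → K) (σ : RatFunc K ≃+* RatFunc K)

def sigmaAction (v : Fin (n + 1) → RatFunc K) : Fin (n + 1) → RatFunc K :=
  (PhiRho (n + 1) θ κtw).transpose.mulVec fun i => σ (v i)

lemma sigmaAction_zero (v : Fin (n + 1) → RatFunc K) :
    sigmaAction θ κtw σ v 0 = (X - C θ) * σ (v (Fin.last n)) := by
  have hlt (x : Fin n) : (x : ℕ) ≠ n := x.is_lt.ne
  simp [sigmaAction, Matrix.mulVec_transpose, Matrix.vecMul, dotProduct, Fin.sum_univ_castSucc,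
    PhiRho, hlt, mul_comm]

lemma sigmaAction_succ (v : Fin (n + 1) → RatFunc K) (i : Fin n) :
    sigmaAction θ κtw σ v i.succ =
      σ (v i.castSucc) + C (-κtw i.castSucc) * σ (v (Fin.last n)) := by
  have hlt (x : Fin n) : (x : ℕ) ≠ n := x.is_lt.ne
  simp only [sigmaAction, Matrix.mulVec_transpose, Matrix.vecMul, dotProduct, PhiRho,
    Fin.val_succ, Nat.add_right_cancel_iff, add_tsub_cancel_right, Nat.add_eq_zero_iff, one_ne_zero,
    and_false, ↓reduceIte, mul_ite, mul_one, mul_neg, mul_zero, Fin.sum_univ_castSucc,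
    Fin.val_castSucc, Fin.val_inj, hlt, sum_ite_eq', mem_univ, Fin.val_last, i.is_lt.ne', map_neg,
    neg_mul, add_right_inj, neg_inj]
  exact mul_comm _ _

end Action

section Size

variable [DecidableEq (RatFunc K)] {n : ℕ}

def coordSize (n i : ℕ) (x : RatFunc K) : ℤᵐ⁰ :=
  inftyValuation K x ^ (n + 1) * exp (i : ℤ)

lemma monotone_pow_mul_exp (i : ℕ) : Monotone fun a : ℤᵐ⁰ => a ^ (n + 1) * exp (i : ℤ) :=
  fun _ _ h => mul_le_mul_left (pow_le_pow_left₀ zero_le h _) _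

lemma coordSize_eq_zero_iff {i : ℕ} {x : RatFunc K} : coordSize n i x = 0 ↔ x = 0 := by
  simp [coordSize]

lemma coordSize_add_le (i : ℕ) (x y : RatFunc K) :
    coordSize n i (x + y) ≤ max (coordSize n i x) (coordSize n i y) :=
  (monotone_pow_mul_exp i (Valuation.map_add _ x y)).trans_eq (monotone_pow_mul_exp i).map_max

lemma coordSize_add_eq_of_lt {i : ℕ} {x y : RatFunc K} (h : coordSize n i x < coordSize n i y) :
    coordSize n i (x + y) = coordSize n i y := by
  have hxy : inftyValuation K x < inftyValuation K y :=
    lt_of_not_ge fun hle => h.not_ge (monotone_pow_mul_exp i hle)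
  rw [coordSize, coordSize, Valuation.map_add_eq_of_lt_right _ hxy]

lemma coordSize_mul (i : ℕ) (c x : RatFunc K) :
    coordSize n i (c * x) = inftyValuation K c ^ (n + 1) * coordSize n i x := by
  rw [coordSize, coordSize, map_mul, mul_pow, mul_assoc]

lemma coordSize_C_mul_le (i : ℕ) (a : K) (x : RatFunc K) :
    coordSize n i (C a * x) ≤ coordSize n i x := by
  rw [coordSize_mul]
  exact mul_le_of_le_one_left' (pow_le_one' (inftyValuation_C_le_one a) _)

lemma coordSize_mono {i j : ℕ} (hij : i ≤ j) (x : RatFunc K) :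
    coordSize n i x ≤ coordSize n j x :=
  mul_le_mul_right (exp_le_exp.2 (by exact_mod_cast hij)) _

lemma coordSize_succ (i : ℕ) (x : RatFunc K) :
    coordSize n (i + 1) x = coordSize n i x * exp 1 := by
  rw [coordSize, coordSize, Nat.cast_succ, exp_add, mul_assoc]

lemma coordSize_X_sub_C_mul (θ : K) (x : RatFunc K) :
    coordSize n 0 ((X - C θ) * x) = coordSize n n x * exp 1 := by
  rw [coordSize_mul, inftyValuation_X_sub_C, coordSize, coordSize, ← exp_nsmul, Nat.cast_zero,
    exp_zero, mul_one, mul_comm, mul_assoc, ← exp_add, nsmul_eq_mul, mul_one, Nat.cast_succ]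

def vecSize (v : Fin (n + 1) → RatFunc K) : ℤᵐ⁰ :=
  univ.sup fun i : Fin (n + 1) => coordSize n i (v i)

lemma coordSize_le_vecSize (v : Fin (n + 1) → RatFunc K) (i : Fin (n + 1)) :
    coordSize n i (v i) ≤ vecSize v :=
  le_sup (f := fun i : Fin (n + 1) => coordSize n i (v i)) (mem_univ i)

lemma vecSize_le_iff {v : Fin (n + 1) → RatFunc K} {a : ℤᵐ⁰} :
    vecSize v ≤ a ↔ ∀ i : Fin (n + 1), coordSize n i (v i) ≤ a := by
  simp [vecSize]

lemma exists_vecSize_eq_coordSize (v : Fin (n + 1) → RatFunc K) :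
    ∃ i : Fin (n + 1), vecSize v = coordSize n i (v i) := by
  obtain ⟨i, -, hi⟩ := exists_mem_eq_sup univ univ_nonempty fun i : Fin (n + 1) =>
    coordSize n i (v i)
  exact ⟨i, hi⟩

lemma vecSize_eq_zero_iff {v : Fin (n + 1) → RatFunc K} : vecSize v = 0 ↔ v = 0 := by
  rw [← WithZero.nonpos_iff_eq_zero, vecSize_le_iff, funext_iff]
  simp only [WithZero.nonpos_iff_eq_zero, coordSize_eq_zero_iff, Pi.zero_apply]

lemma vecSize_add_eq_of_lt {v w : Fin (n + 1) → RatFunc K} (h : vecSize v < vecSize w) :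
    vecSize (v + w) = vecSize w := by
  refine le_antisymm (vecSize_le_iff.2 fun i => ?_) ?_
  · exact (coordSize_add_le _ _ _).trans
      (max_le ((coordSize_le_vecSize v i).trans h.le) (coordSize_le_vecSize w i))
  · obtain ⟨m, hm⟩ := exists_vecSize_eq_coordSize w
    rw [hm, ← coordSize_add_eq_of_lt ((coordSize_le_vecSize v m).trans_lt (hm ▸ h))]
    exact coordSize_le_vecSize (v + w) m

lemma vecSize_sum_eq_sup {ι : Type*} [DecidableEq ι] (s : Finset ι)
    (f : ι → Fin (n + 1) → RatFunc K) (hf : Set.InjOn (vecSize ∘ f) s) :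
    vecSize (∑ i ∈ s, f i) = s.sup (vecSize ∘ f) := by
  induction s using Finset.induction_on with
  | empty => rw [sum_empty, sup_empty, vecSize_eq_zero_iff.2 rfl, zero_eq_bot]
  | insert a s ha ih =>
    rw [coe_insert] at hf
    have ih := ih (hf.mono (Set.subset_insert _ _))
    rw [sum_insert ha, sup_insert, Function.comp_apply, ← ih]
    rcases s.eq_empty_or_nonempty with rfl | hs
    · rw [sum_empty, add_zero, vecSize_eq_zero_iff.2 rfl, max_eq_left zero_le]
    obtain ⟨j, hj, hjsup⟩ := exists_mem_eq_sup s hs (vecSize ∘ f)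
    have hne : vecSize (f a) ≠ vecSize (∑ i ∈ s, f i) := by
      rw [ih, hjsup]
      exact fun h => ha (hf (Set.mem_insert _ _) (Set.mem_insert_of_mem _ hj) h ▸ hj)
    rcases hne.lt_or_gt with h | h
    · rw [vecSize_add_eq_of_lt h, sup_of_le_right h.le]
    · rw [add_comm, vecSize_add_eq_of_lt h, sup_of_le_left h.le]

lemma vecSize_smul (c : RatFunc K) (v : Fin (n + 1) → RatFunc K) :
    vecSize (c • v) = inftyValuation K c ^ (n + 1) * vecSize v := by
  simp only [vecSize, Pi.smul_apply, smul_eq_mul, coordSize_mul]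
  exact (apply_sup_eq_sup_comp _ (fun _ _ => Monotone.map_max fun _ _ h => mul_le_mul_right h _)
    (by rw [← zero_eq_bot, mul_zero])).symm

theorem linearIndependent_of_vecSize_eq {ι : Type*} [Fintype ι]
    {u : ι → Fin (n + 1) → RatFunc K}
    {a : ℤᵐ⁰} (ha : a ≠ 0) {e : ι → ℤ} (hu : ∀ i, vecSize (u i) = a * exp (e i))
    (he : ∀ i j, e i ≡ e j [ZMOD n + 1] → i = j) :
    LinearIndependent (RatFunc K) u := by
  classical
  rw [Fintype.linearIndependent_iff]
  intro c hc i
  by_contra hci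
  set s := univ.filter fun j => c j ≠ 0
  have hsize : ∀ j ∈ s, vecSize (c j • u j) = a * exp ((n + 1) * (c j).intDegree + e j) := by
    intro j hj
    rw [vecSize_smul, hu, inftyValuation_apply, inftyValuation_of_nonzero _ (mem_filter.1 hj).2,
      exp_add, ← exp_nsmul, nsmul_eq_mul]
    push_cast
    exact mul_left_comm _ _ _
  have hinj : Set.InjOn (vecSize ∘ fun j => c j • u j) s := by
    intro j hj k hk h
    simp only [Function.comp_apply, hsize j hj, hsize k hk, mul_right_inj' ha, exp_inj] at h
    exact he j k (Int.modEq_iff_dvd.2 ⟨(c j).intDegree - (c k).intDegree, by linarith⟩)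
  have hsum : ∑ j ∈ s, c j • u j = 0 :=
    (sum_filter_of_ne fun j _ => mt fun hcj => by rw [hcj, zero_smul]).trans hc
  have hi : i ∈ s := mem_filter.2 ⟨mem_univ _, hci⟩
  have hle := le_sup (f := vecSize ∘ fun j => c j • u j) hi
  rw [← vecSize_sum_eq_sup s _ hinj, hsum, vecSize_eq_zero_iff.2 rfl, Function.comp_apply,
    hsize i hi, WithZero.nonpos_iff_eq_zero] at hle
  exact mul_ne_zero ha exp_ne_zero hle

lemma vecSize_sigmaAction {θ : K} {κtw : Fin (n + 1) → K} {σ : RatFunc K ≃+* RatFunc K}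
    (hσ : ∀ x, inftyValuation K (σ x) = inftyValuation K x) (v : Fin (n + 1) → RatFunc K) :
    vecSize (sigmaAction θ κtw σ v) = vecSize v * exp 1 := by
  have hσc (i : ℕ) (x : RatFunc K) : coordSize n i (σ x) = coordSize n i x := by
    rw [coordSize, coordSize, hσ]
  have hκ (i : Fin n) :
      coordSize n i.succ (C (-κtw i.castSucc) * σ (v (Fin.last n))) ≤ vecSize v :=
    calc _ ≤ coordSize n i.succ (v (Fin.last n)) := (coordSize_C_mul_le _ _ _).trans_eq (hσc _ _)
      _ ≤ coordSize n n (v (Fin.last n)) := coordSize_mono i.succ.is_le _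
      _ ≤ vecSize v := coordSize_le_vecSize v (Fin.last n)
  refine le_antisymm (vecSize_le_iff.2 fun j => ?_) ?_
  · cases j using Fin.cases with
    | zero =>
      rw [sigmaAction_zero, Fin.val_zero, coordSize_X_sub_C_mul, hσc]
      exact mul_le_mul_left (coordSize_le_vecSize v (Fin.last n)) _
    | succ i =>
      rw [sigmaAction_succ]
      refine (coordSize_add_le _ _ _).trans
        (max_le ?_ ((hκ i).trans (le_mul_of_one_le_right' one_lt_exp_one.le)))
      rw [Fin.val_succ, coordSize_succ, hσc]
      exact mul_le_mul_left (coordSize_le_vecSize v _) _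
  rcases eq_or_ne (vecSize v) 0 with h0 | h0
  · rw [h0, zero_mul]
    exact zero_le
  obtain ⟨m, hm⟩ := exists_vecSize_eq_coordSize v
  rw [hm]
  cases m using Fin.lastCases with
  | last =>
    calc _ = coordSize n 0 (sigmaAction θ κtw σ v 0) := by
          rw [sigmaAction_zero, coordSize_X_sub_C_mul, hσc, Fin.val_last]
      _ ≤ _ := coordSize_le_vecSize _ 0
  | cast i =>
    have hlt : coordSize n i.succ (C (-κtw i.castSucc) * σ (v (Fin.last n))) <
        coordSize n i.succ (σ (v i.castSucc)) :=
      calc _ ≤ vecSize v := hκ i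
        _ < vecSize v * exp 1 := lt_mul_of_one_lt_right (pos_iff_ne_zero.2 h0) one_lt_exp_one
        _ = _ := by rw [hσc, Fin.val_succ, coordSize_succ, hm, Fin.val_castSucc]
    calc _ = coordSize n i.succ (sigmaAction θ κtw σ v i.succ) := by
          rw [sigmaAction_succ, add_comm (σ _), coordSize_add_eq_of_lt hlt, hσc, Fin.val_succ,
            coordSize_succ, Fin.val_castSucc]
      _ ≤ _ := coordSize_le_vecSize _ _

lemma vecSize_iterate_sigmaAction {θ : K} {κtw : Fin (n + 1) → K}
    {σ : RatFunc K ≃+* RatFunc K}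
    (hσ : ∀ x, inftyValuation K (σ x) = inftyValuation K x) (v : Fin (n + 1) → RatFunc K)
    (m : ℕ) : vecSize ((sigmaAction θ κtw σ)^[m] v) = vecSize v * exp (m : ℤ) := by
  induction m with
  | zero => simp
  | succ m ih =>
    rw [Function.iterate_succ_apply', vecSize_sigmaAction hσ, ih, Nat.cast_succ, exp_add,
      mul_assoc]

end Size

end DrinfeldPreTMotive

open DrinfeldPreTMotive

theorem statement5
    -- k̄ : the algebraic closure of k = 𝔽q(θ); it is algebraically closed of char p
    (Kb : Type) [Field Kb]
    (θ : Kb)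
    -- ρ_t = θ + κ₁τ + ⋯ + κ_rτ^r with κ_r = 1
    (r : ℕ)
    -- the inverse twists κ_{j+1}^{(−(j+1))}
    (κtw : Fin r → Kb)
    -- σ_K : the inverse-twisting automorphism f ↦ f^{(−1)} of k̄(t); it is characterized by
    -- σ_K(f^{(1)}) = f on polynomials, where f^{(1)} is the coefficientwise q-th power twist
    (frobKb : Kb →+* Kb)
    (σK : RatFunc Kb ≃+* RatFunc Kb)
    (hσK : ∀ f : Polynomial Kb,
      σK (algebraMap (Polynomial Kb) (RatFunc Kb) (f.map frobKb)) =
        algebraMap (Polynomial Kb) (RatFunc Kb) f) :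
    -- conclusion : M_ρ is simple as a left k̄(t)[σ,σ^{-1}]-module
    ∀ W : Submodule (RatFunc Kb) (Fin r → RatFunc Kb),
      ((fun v : Fin r → RatFunc Kb =>
          (PhiRho r θ κtw).transpose.mulVec (fun i => σK (v i))) '' W = W) →
      W = ⊥ ∨ W = ⊤ := by
  classical
  intro W hW
  rcases r with _ | n
  · exact Or.inl (Subsingleton.elim _ _)
  refine or_iff_not_imp_left.2 fun hW0 => ?_
  obtain ⟨w, hwW, hw0⟩ := W.ne_bot_iff.1 hW0
  have hstable : Set.MapsTo (sigmaAction θ κtw σK) W W :=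
    Set.mapsTo_iff_image_subset.2 hW.subset
  have hind : LinearIndependent (RatFunc Kb)
      fun i : Fin (n + 1) => (sigmaAction θ κtw σK)^[i] w :=
    linearIndependent_of_vecSize_eq (vecSize_eq_zero_iff.not.2 hw0)
      (vecSize_iterate_sigmaAction (inftyValuation_apply_of_map_eq hσK) w ·)
      fun i j h => Fin.ext <|
        (Int.natCast_modEq_iff.1 (by exact_mod_cast h)).eq_of_lt_of_lt i.is_lt j.is_lt
  rw [eq_top_iff, ← hind.span_eq_top_of_card_eq_finrank (by simp), Submodule.span_le]
  rintro _ ⟨i, rfl⟩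
  exact hstable.iterate i hwW
end
end

section
/- If u_1,…,u_n ∈ ℂ_∞ are linearly independent over k = 𝔽_q(θ), then the Anderson generating functions f_{u_1}(t),…,f_{u_n}(t) are linearly independent over 𝔽_q(t). -/
/-!
Comparing coefficients in `exp_ρ(θz) = ρ_t(exp_ρ(z))` expresses `κ_r α_i^{q^r}` through the
later coefficients `α_{i+1}, …, α_{i+r}`. If `|θ| ≤ 1`, then for `|z|` large every term
`α_i z^{q^i}` of norm `≥ T` is followed by another one, so the terms do not tend to `0` and
`exp_ρ` is not entire; hence `|θ| > 1`.

Given a relation `∑ c_i f_{u_i} = 0` with `c_i ∈ 𝔽_q[t]`, the `𝔽_q`-linearity of `exp_ρ` shows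
that its `m`-th coefficient is `exp_ρ(S / θ^{m+1})` with `S = ∑ c_i(θ) u_i`, as soon as
`m ≥ deg c_i`. Since `exp_ρ` is an isometry near `0` and `S / θ^{m+1} → 0`, this forces `S = 0`;
linear independence of the `u_i` gives `c_i(θ) = 0`, and a nonzero polynomial with coefficients
in `𝔽_q` cannot vanish at `θ` because its leading term dominates when `|θ| > 1`.
-/

open Filter Topology Polynomial

namespace AndersonGenFun

lemma exists_one_le_mul_pow_le {a : ℝ} (ha : 0 < a) (C : ℝ) {e e' : ℕ} (he : e < e') :
    ∃ T, 1 ≤ T ∧ C * T ^ e ≤ a * T ^ e' := by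
  set T := max 1 (C / a)
  have hT : C ≤ a * T := by rw [← div_le_iff₀' ha]; exact le_max_right _ _
  refine ⟨T, le_max_left _ _, ?_⟩
  calc C * T ^ e ≤ a * T * T ^ e := by gcongr
    _ = a * T ^ (e + 1) := by ring
    _ ≤ a * T ^ e' := by gcongr; exacts [le_max_left _ _, he]

lemma exists_pos_norm_le_of_tendsto_zero {E : Type*} [SeminormedAddGroup E] {β : ℕ → E}
    (h : Tendsto β atTop (𝓝 0)) : ∃ M, 0 < M ∧ ∀ k, ‖β k‖ ≤ M := by
  obtain ⟨M, hM⟩ := (by simpa using h.norm : Tendsto (‖β ·‖) atTop (𝓝 0)).isBoundedUnder_le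
    |>.bddAbove_range
  exact ⟨max M 1, by positivity, fun k => (hM ⟨k, rfl⟩).trans (le_max_left _ _)⟩

lemma iterateFrobenius_eq_pow_pow {R : Type*} [CommSemiring R] {p mq q : ℕ} [ExpChar R p]
    (hq : q = p ^ mq) (s : ℕ) (x : R) : iterateFrobenius R p (mq * s) x = x ^ q ^ s := by
  rw [iterateFrobenius_def, hq, pow_mul]

section NormedField

variable {K : Type*} [NormedField K] {q : ℕ}

lemma norm_eq_one_of_pow_eq_self (hq : 2 ≤ q) {c : K} (hc : c ^ q = c) (hc0 : c ≠ 0) :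
    ‖c‖ = 1 := by
  have h1 : c ^ (q - 1) = 1 := by
    rw [← mul_left_inj' hc0, ← pow_succ, Nat.sub_add_cancel (by omega), hc, one_mul]
  exact (pow_eq_one_iff_of_nonneg (n := q - 1) (norm_nonneg c) (by omega)).1
    (by rw [← norm_pow, h1, norm_one])

lemma norm_le_one_of_pow_eq_self (hq : 2 ≤ q) {c : K} (hc : c ^ q = c) : ‖c‖ ≤ 1 := by
  rcases eq_or_ne c 0 with rfl | hc0
  · simp
  · exact (norm_eq_one_of_pow_eq_self hq hc hc0).le

lemma exists_lt_le_norm_of_recursion {r : ℕ} {θ : K} {κ : Fin (r + 1) → K} {b : ℕ → K}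
    (hq : 0 < q) (hθ : ‖θ‖ ≤ 1)
    (hb : ∀ m, b m * (θ ^ q ^ m - θ) =
      ∑ j, κ j * if j.1 + 1 ≤ m then b (m - (j.1 + 1)) ^ q ^ (j.1 + 1) else 0)
    {T : ℝ} (hT1 : 1 ≤ T)
    (hT : (2 + ∑ j, ‖κ j‖) * T ^ q ^ r ≤ ‖κ (Fin.last r)‖ * T ^ q ^ (r + 1))
    {i : ℕ} (hi : T ≤ ‖b i‖) : ∃ i' > i, T ≤ ‖b i'‖ := by
  by_contra! hsmall
  set m := i + (r + 1)
  have hrec : κ (Fin.last r) * b i ^ q ^ (r + 1) = b m * (θ ^ q ^ m - θ) -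
      ∑ j : Fin r, κ j.castSucc * b (m - (j.1 + 1)) ^ q ^ (j.1 + 1) := by
    rw [hb m, Finset.sum_congr rfl fun j _ => by rw [if_pos (by omega)], Fin.sum_univ_castSucc]
    simp [m]
  have hTpow : ∀ s ≤ r, T ^ q ^ s ≤ T ^ q ^ r := fun s hs =>
    pow_le_pow_right₀ hT1 (Nat.pow_le_pow_right hq hs)
  have hfirst : ‖b m * (θ ^ q ^ m - θ)‖ < 2 * T ^ q ^ r := by
    have hθm : ‖θ ^ q ^ m - θ‖ ≤ 2 := (norm_sub_le _ _).trans (by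
      rw [norm_pow]; linarith [pow_le_one₀ (norm_nonneg θ) hθ (n := q ^ m)])
    calc ‖b m * (θ ^ q ^ m - θ)‖ ≤ ‖b m‖ * 2 := by rw [norm_mul]; gcongr
      _ < T * 2 := by gcongr; exact hsmall m (by omega)
      _ ≤ 2 * T ^ q ^ r := by
        rw [mul_comm]; gcongr; simpa using hTpow 0 (Nat.zero_le r)
  have hrest : ‖∑ j : Fin r, κ j.castSucc * b (m - (j.1 + 1)) ^ q ^ (j.1 + 1)‖ ≤
      (∑ j, ‖κ j‖) * T ^ q ^ r := by
    refine (norm_sum_le _ _).trans ?_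
    rw [Fin.sum_univ_castSucc (fun j => ‖κ j‖), add_mul, Finset.sum_mul]
    refine le_add_of_le_of_nonneg (Finset.sum_le_sum fun j _ => ?_) (by positivity)
    rw [norm_mul, norm_pow]
    gcongr
    exact (pow_le_pow_left₀ (norm_nonneg _) (hsmall _ (by omega)).le _).trans (hTpow _ j.2)
  have hlast : ‖κ (Fin.last r)‖ * T ^ q ^ (r + 1) ≤ ‖κ (Fin.last r) * b i ^ q ^ (r + 1)‖ := by
    rw [norm_mul, norm_pow]; gcongr
  have := (hrec ▸ hlast).trans (norm_sub_le _ _)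
  linarith

variable [IsUltrametricDist K]

lemma norm_eq_of_hasSum_of_norm_tail_lt {f : ℕ → K} {s : K} (hf : HasSum f s) {B : ℝ}
    (hB : B < ‖f 0‖) (htail : ∀ n, ‖f (n + 1)‖ ≤ B) : ‖s‖ = ‖f 0‖ := by
  have htail_sum : HasSum (fun n => f (n + 1)) (s - f 0) := by
    simpa using (hasSum_nat_add_iff' 1).mpr hf
  have hlt : ‖s - f 0‖ < ‖f 0‖ := by
    refine lt_of_le_of_lt ?_ hB
    rw [← htail_sum.tsum_eq]
    exact IsUltrametricDist.norm_tsum_le_of_forall_le_of_nonneg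
      ((norm_nonneg _).trans (htail 0)) htail
  calc ‖s‖ = ‖f 0 + (s - f 0)‖ := by rw [add_sub_cancel]
    _ = ‖f 0‖ := by
      rw [IsUltrametricDist.norm_add_eq_max_of_norm_ne_norm hlt.ne', max_eq_left hlt.le]

lemma norm_eval_eq_of_norm_coeff_le {P : K[X]} {θ : K} (hθ : 1 < ‖θ‖)
    (hP : ∀ j, ‖P.coeff j‖ ≤ ‖P.leadingCoeff‖) :
    ‖P.eval θ‖ = ‖P.leadingCoeff‖ * ‖θ‖ ^ P.natDegree := by
  rcases eq_or_ne P 0 with rfl | hP0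
  · simp
  have hlead : 0 < ‖P.leadingCoeff‖ := norm_pos_iff.2 (leadingCoeff_ne_zero.2 hP0)
  have hθ0 : 0 < ‖θ‖ := one_pos.trans hθ
  have hlow : ‖∑ j ∈ Finset.range P.natDegree, P.coeff j * θ ^ j‖ <
      ‖P.leadingCoeff * θ ^ P.natDegree‖ := by
    rw [norm_mul, norm_pow]
    refine lt_of_le_of_lt (IsUltrametricDist.norm_sum_le_of_forall_le_of_nonneg
      (C := ‖P.leadingCoeff‖ * (‖θ‖ ^ P.natDegree / ‖θ‖)) (by positivity) fun j hj => ?_)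
      (mul_lt_mul_of_pos_left (div_lt_self (by positivity) hθ) hlead)
    rw [norm_mul, norm_pow]
    refine mul_le_mul (hP j) ?_ (by positivity) (norm_nonneg _)
    rw [le_div_iff₀ hθ0, ← pow_succ]
    exact pow_le_pow_right₀ hθ.le (Finset.mem_range.1 hj)
  rw [eval_eq_sum_range, Finset.sum_range_succ, coeff_natDegree,
    IsUltrametricDist.norm_add_eq_max_of_norm_ne_norm hlow.ne, max_eq_right hlow.le, norm_mul,
    norm_pow]

lemma eq_zero_of_eval_eq_zero_of_pow_coeff_eq_self (hq : 2 ≤ q) {P : K[X]} {θ : K}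
    (hθ : 1 < ‖θ‖) (hP : ∀ j, P.coeff j ^ q = P.coeff j) (h : P.eval θ = 0) : P = 0 := by
  by_contra hP0
  have hlead : ‖P.leadingCoeff‖ = 1 :=
    norm_eq_one_of_pow_eq_self hq (hP _) (leadingCoeff_ne_zero.2 hP0)
  have := norm_eval_eq_of_norm_coeff_le hθ fun j => hlead ▸ norm_le_one_of_pow_eq_self hq (hP j)
  rw [h, norm_zero, hlead, one_mul] at this
  exact (pow_pos (one_pos.trans hθ) _).ne this

end NormedField

section Series

variable {K : Type*} [NontriviallyNormedField K] [IsUltrametricDist K]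

lemma eq_zero_of_forall_hasSum_zero {e : ℕ → ℕ} (he : StrictMono e) {β : ℕ → K}
    (h : ∀ z : K, HasSum (fun m => β m * z ^ e m) 0) (m : ℕ) : β m = 0 := by
  induction m using Nat.strong_induction_on with
  | _ m ih =>
  by_contra hm
  obtain ⟨M, hM0, hM⟩ := exists_pos_norm_le_of_tendsto_zero
    (by simpa using (h 1).summable.tendsto_atTop_zero)
  obtain ⟨z, hz0, hz⟩ := NormedField.exists_norm_lt K
    (lt_min one_pos (div_pos (norm_pos_iff.2 hm) hM0))
  have hz1 : ‖z‖ ≤ 1 := (hz.trans_le (min_le_left _ _)).le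
  have hzM : M * ‖z‖ < ‖β m‖ := by
    rw [mul_comm, ← lt_div_iff₀ hM0]; exact hz.trans_le (min_le_right _ _)
  have hshift : HasSum (fun n => β (n + m) * z ^ e (n + m)) 0 := by
    have := (hasSum_nat_add_iff' m).mpr (h z)
    rwa [Finset.sum_eq_zero fun k hk => by rw [ih k (Finset.mem_range.1 hk), zero_mul],
      sub_zero] at this
  -- the lowest term `β m z^{e m}` dominates the tail for small `z`
  have hnorm := norm_eq_of_hasSum_of_norm_tail_lt hshift (B := M * ‖z‖ ^ (e m + 1)) ?_ ?_
  · simp only [zero_add, norm_zero, norm_mul, norm_pow] at hnorm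
    exact hm (by simpa [hz0.ne'] using hnorm.symm)
  · simp only [zero_add, norm_mul, norm_pow, pow_succ, ← mul_assoc]
    rw [mul_right_comm]
    exact mul_lt_mul_of_pos_right hzM (by positivity)
  · intro n
    simp only [norm_mul, norm_pow]
    exact mul_le_mul (hM _) (pow_le_pow_of_le_one (norm_nonneg z) hz1 (he (by omega)))
      (by positivity) hM0.le

variable {q : ℕ} {α : ℕ → K} {E : K → K}

lemma eventually_norm_eq (hq : 2 ≤ q) (hE : ∀ z, HasSum (fun i => α i * z ^ q ^ i) (E z))
    (hα0 : α 0 = 1) : ∀ᶠ w in 𝓝 0, ‖E w‖ = ‖w‖ := by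
  obtain ⟨M, hM0, hM⟩ := exists_pos_norm_le_of_tendsto_zero
    (by simpa using (hE 1).summable.tendsto_atTop_zero)
  filter_upwards [Metric.ball_mem_nhds (0 : K) (lt_min one_pos (inv_pos.2 hM0))] with w hw
  rw [mem_ball_zero_iff, lt_min_iff] at hw
  rcases eq_or_ne w 0 with rfl | hw0
  · have hE0 : HasSum (fun i => α i * (0 : K) ^ q ^ i) 0 := by
      simp [zero_pow (pow_ne_zero _ (by omega : q ≠ 0))]
    rw [(hE 0).unique hE0]
  have hMw : M * ‖w‖ < 1 := by rw [← lt_div_iff₀' hM0, one_div]; exact hw.2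
  refine (norm_eq_of_hasSum_of_norm_tail_lt (hE w) (B := M * ‖w‖ ^ 2) ?_ fun n => ?_).trans
    (by simp [hα0])
  · simp only [pow_zero, pow_one, hα0, one_mul, sq, ← mul_assoc]
    exact mul_lt_of_lt_one_left (norm_pos_iff.2 hw0) hMw
  · simp only [norm_mul, norm_pow]
    exact mul_le_mul (hM _) (pow_le_pow_of_le_one (norm_nonneg w) hw.1.le
      (hq.trans (Nat.le_self_pow (by omega) q))) (by positivity) hM0.le

lemma map_mul_of_pow_eq_self (hE : ∀ z, HasSum (fun i => α i * z ^ q ^ i) (E z)) {c : K}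
    (hc : c ^ q = c) (x : K) : E (c * x) = c * E x := by
  have hc' : ∀ i, c ^ q ^ i = c := fun i => by
    induction i with
    | zero => rw [pow_zero, pow_one]
    | succ i ih => rw [pow_succ, pow_mul, ih, hc]
  exact (hE (c * x)).unique (by simpa only [mul_pow, hc', mul_left_comm c] using (hE x).mul_left c)

variable {p mq : ℕ} [ExpChar K p]

lemma map_add_of_expChar (hq : q = p ^ mq) (hE : ∀ z, HasSum (fun i => α i * z ^ q ^ i) (E z))
    (x y : K) : E (x + y) = E x + E y :=
  (hE (x + y)).unique (by
    simpa only [← iterateFrobenius_eq_pow_pow hq, map_add, mul_add] using (hE x).add (hE y))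

lemma map_sum_of_expChar (hq : q = p ^ mq) (hE : ∀ z, HasSum (fun i => α i * z ^ q ^ i) (E z))
    {ι : Type*} (s : Finset ι) (f : ι → K) : E (∑ i ∈ s, f i) = ∑ i ∈ s, E (f i) :=
  map_sum (AddMonoidHom.mk' E (map_add_of_expChar hq hE)) f s

lemma hasSum_pow_pow_shift (hq : q = p ^ mq) (hE : ∀ z, HasSum (fun i => α i * z ^ q ^ i) (E z))
    (s : ℕ) (z : K) :
    HasSum (fun k => (if s ≤ k then α (k - s) ^ q ^ s else 0) * z ^ q ^ k) (E z ^ q ^ s) := by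
  have hcont : Continuous (iterateFrobenius K p (mq * s)) :=
    (continuous_pow (q ^ s)).congr fun x => (iterateFrobenius_eq_pow_pow hq s x).symm
  have hfrob := (hE z).map (iterateFrobenius K p (mq * s)) hcont
  simp only [Function.comp_def, iterateFrobenius_eq_pow_pow hq, mul_pow, ← pow_mul,
    ← pow_add] at hfrob
  rw [← hasSum_nat_add_iff' s, Finset.sum_eq_zero fun k hk => ?_, sub_zero]
  · simpa using hfrob
  · rw [if_neg (by simpa using hk), zero_mul]

lemma coeff_recursion (hq : q = p ^ mq) (hq2 : 2 ≤ q)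
    (hE : ∀ z, HasSum (fun i => α i * z ^ q ^ i) (E z)) {r : ℕ} {θ : K} {κ : Fin r → K}
    (hfunc : ∀ z, E (θ * z) = θ * E z + ∑ j, κ j * E z ^ q ^ (j.1 + 1)) (m : ℕ) :
    α m * (θ ^ q ^ m - θ) =
      ∑ j, κ j * if j.1 + 1 ≤ m then α (m - (j.1 + 1)) ^ q ^ (j.1 + 1) else 0 := by
  refine sub_eq_zero.1 (eq_zero_of_forall_hasSum_zero (pow_right_strictMono₀ (by omega : 1 < q))
    (β := fun k => α k * (θ ^ q ^ k - θ) -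
      ∑ j, κ j * if j.1 + 1 ≤ k then α (k - (j.1 + 1)) ^ q ^ (j.1 + 1) else 0) (fun z => ?_) m)
  have hL : HasSum (fun k => α k * θ ^ q ^ k * z ^ q ^ k) (E (θ * z)) := by
    simpa only [mul_pow, mul_assoc] using hE (θ * z)
  have hR := ((hE z).mul_left θ).add (hasSum_sum (s := Finset.univ) fun j _ =>
    (hasSum_pow_pow_shift hq hE (j.1 + 1) z).mul_left (κ j))
  rw [← hfunc] at hR
  have hdiff := hL.sub hR
  rw [sub_self] at hdiff
  refine hdiff.congr_fun fun k => ?_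
  rw [sub_mul, Finset.sum_mul]
  simp only [mul_assoc]
  ring

lemma coeff_mul_pow_recursion (hq : q = p ^ mq) (hq2 : 2 ≤ q)
    (hE : ∀ z, HasSum (fun i => α i * z ^ q ^ i) (E z)) {r : ℕ} {θ : K} {κ : Fin r → K}
    (hfunc : ∀ z, E (θ * z) = θ * E z + ∑ j, κ j * E z ^ q ^ (j.1 + 1)) (z : K) (m : ℕ) :
    α m * z ^ q ^ m * (θ ^ q ^ m - θ) = ∑ j, κ j *
      if j.1 + 1 ≤ m then (α (m - (j.1 + 1)) * z ^ q ^ (m - (j.1 + 1))) ^ q ^ (j.1 + 1) else 0 := by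
  rw [mul_right_comm, coeff_recursion hq hq2 hE hfunc m, Finset.sum_mul]
  refine Finset.sum_congr rfl fun j _ => ?_
  split_ifs with hj
  · rw [mul_pow, ← pow_mul, ← pow_add, Nat.sub_add_cancel hj]
    ring
  · simp

lemma one_lt_norm_of_functional_equation (hq : q = p ^ mq) (hq2 : 2 ≤ q)
    (hE : ∀ z, HasSum (fun i => α i * z ^ q ^ i) (E z)) (hα0 : α 0 = 1) {r : ℕ} {θ : K}
    {κ : Fin (r + 1) → K} (hκ : κ (Fin.last r) ≠ 0)
    (hfunc : ∀ z, E (θ * z) = θ * E z + ∑ j, κ j * E z ^ q ^ (j.1 + 1)) : 1 < ‖θ‖ := by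
  by_contra! hθ
  obtain ⟨T, hT1, hT⟩ := exists_one_le_mul_pow_le (norm_pos_iff.2 hκ) (2 + ∑ j, ‖κ j‖)
    (pow_lt_pow_right₀ (by omega : 1 < q) (Nat.lt_succ_self r))
  obtain ⟨z, hz⟩ := NormedField.exists_lt_norm K T
  have hstep : ∀ i, T ≤ ‖α i * z ^ q ^ i‖ → ∃ i' > i, T ≤ ‖α i' * z ^ q ^ i'‖ := fun i =>
    exists_lt_le_norm_of_recursion (by omega) hθ (coeff_mul_pow_recursion hq hq2 hE hfunc z) hT1 hT
  have hlarge : ∀ N, ∃ i ≥ N, T ≤ ‖α i * z ^ q ^ i‖ := by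
    intro N
    induction N with
    | zero => exact ⟨0, le_rfl, by simpa [hα0] using hz.le⟩
    | succ N ih =>
      obtain ⟨i, hNi, hi⟩ := ih
      obtain ⟨i', hii', hi'⟩ := hstep i hi
      exact ⟨i', by omega, hi'⟩
  have hsmall : ∀ᶠ i in atTop, ‖α i * z ^ q ^ i‖ < T :=
    (hE z).summable.tendsto_atTop_zero.norm.eventually
      (gt_mem_nhds (by rw [norm_zero]; linarith))
  obtain ⟨N, hN⟩ := eventually_atTop.1 hsmall
  obtain ⟨i, hNi, hi⟩ := hlarge N
  exact (hN i hNi).not_ge hi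

def andersonSeries (E : K → K) (θ u : K) : PowerSeries K :=
  PowerSeries.mk fun m => E (u / θ ^ (m + 1))

lemma coeff_mul_andersonSeries (hq : q = p ^ mq)
    (hE : ∀ z, HasSum (fun i => α i * z ^ q ^ i) (E z)) {θ : K} (hθ : θ ≠ 0) {P : K[X]}
    (hP : ∀ j, P.coeff j ^ q = P.coeff j) (u : K) {m : ℕ} (hm : P.natDegree ≤ m) :
    PowerSeries.coeff m ((P : PowerSeries K) * andersonSeries E θ u) =
      E (P.eval θ * (u / θ ^ (m + 1))) := by
  rw [PowerSeries.coeff_mul, Finset.Nat.sum_antidiagonal_eq_sum_range_succ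
    (fun a b => PowerSeries.coeff a (P : PowerSeries K) * PowerSeries.coeff b _),
    eval_eq_sum_range' (Nat.lt_succ_of_le hm), Finset.sum_mul, map_sum_of_expChar hq hE]
  refine Finset.sum_congr rfl fun k hk => ?_
  have hkm : k ≤ m := Nat.lt_succ_iff.1 (Finset.mem_range.1 hk)
  rw [Polynomial.coeff_coe, andersonSeries, PowerSeries.coeff_mk, mul_assoc,
    map_mul_of_pow_eq_self hE (hP k)]
  have hpow : θ ^ (m + 1) = θ ^ k * θ ^ (m - k + 1) := by rw [← pow_add]; congr 1; omega
  rw [hpow, ← mul_div_assoc, mul_div_mul_left _ _ (pow_ne_zero k hθ)]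

lemma eq_zero_of_eventually_map_div_pow_eq_zero (hq2 : 2 ≤ q)
    (hE : ∀ z, HasSum (fun i => α i * z ^ q ^ i) (E z)) (hα0 : α 0 = 1) {θ : K}
    (hθ : 1 < ‖θ‖) {S : K} (h : ∀ᶠ m in atTop, E (S / θ ^ (m + 1)) = 0) : S = 0 := by
  have hθ0 : θ ≠ 0 := norm_pos_iff.1 (one_pos.trans hθ)
  have hlim : Tendsto (fun m => S / θ ^ (m + 1)) atTop (𝓝 0) := by
    have := ((tendsto_pow_atTop_nhds_zero_of_norm_lt_one (x := θ⁻¹)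
      (by rw [norm_inv]; exact inv_lt_one_of_one_lt₀ hθ)).comp (tendsto_add_atTop_nat 1)).const_mul S
    simpa [div_eq_mul_inv, Function.comp_def] using this
  obtain ⟨m, hnorm, hzero⟩ := ((hlim.eventually (eventually_norm_eq hq2 hE hα0)).and h).exists
  rw [hzero, norm_zero, eq_comm, norm_eq_zero, div_eq_zero_iff] at hnorm
  exact hnorm.resolve_right (pow_ne_zero _ hθ0)

end Series

end AndersonGenFun

open AndersonGenFun in
theorem statement6
    -- q a power of the prime p
    (p mq q : ℕ) (hp : p.Prime) (hmq : 0 < mq) (hq : q = p ^ mq)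
    -- ℂ∞ : complete, algebraically closed, nonarchimedean, characteristic p
    (Cinf : Type) [NontriviallyNormedField Cinf]
    [IsUltrametricDist Cinf] [CharP Cinf p]
    -- the rank r Drinfeld 𝔽q[t]-module ρ_t = θ + κ₁τ + ⋯ + κ_rτ^r, κ_r ≠ 0, defined over k̄
    (r : ℕ) (hr : 0 < r)
    (θ : Cinf) (hθ : θ ≠ 0) (κ : Fin r → Cinf)
    (hκr : κ ⟨r - 1, by omega⟩ ≠ 0)
    -- the exponential exp_ρ(z) = z + ∑_{i≥1} αᵢ z^{qⁱ}, entire, with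
    -- exp_ρ(θz) = ρ_t(exp_ρ(z))
    (α : ℕ → Cinf) (hα0 : α 0 = 1)
    (expρ : Cinf → Cinf)
    (hexp : ∀ z, HasSum (fun i => α i * z ^ q ^ i) (expρ z))
    (hfunc : ∀ z, expρ (θ * z) = θ * expρ z + ∑ i, κ i * expρ z ^ q ^ (i.1 + 1))
    -- u₁, …, u_n ∈ ℂ∞ linearly independent over k = 𝔽q(θ)
    (n : ℕ) (u : Fin n → Cinf)
    (hind : ∀ a : Fin n → Polynomial Cinf,
      (∀ i j, ((a i).coeff j) ^ q = (a i).coeff j) →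
      ∑ i, (a i).eval θ * u i = 0 → ∀ i, (a i).eval θ = 0) :
    -- conclusion : f_{u_1}, …, f_{u_n} are linearly independent over 𝔽q(t)
    ∀ c : Fin n → Polynomial Cinf,
      (∀ i j, ((c i).coeff j) ^ q = (c i).coeff j) →
      (∑ i, (c i : PowerSeries Cinf) *
          PowerSeries.mk (fun m => expρ (u i / θ ^ (m + 1))) = 0) →
      ∀ i, c i = 0 := by
  intro c hc hrel
  have : Fact p.Prime := ⟨hp⟩
  have hq2 : 2 ≤ q := hq ▸ hp.two_le.trans (Nat.le_self_pow hmq.ne' p)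
  obtain ⟨r, rfl⟩ : ∃ r', r = r' + 1 := ⟨r - 1, by omega⟩
  have hθ1 : 1 < ‖θ‖ := one_lt_norm_of_functional_equation hq hq2 hexp hα0 hκr hfunc
  set S := ∑ i, (c i).eval θ * u i
  have hcoeff : ∀ m ≥ Finset.univ.sup fun i => (c i).natDegree, expρ (S / θ ^ (m + 1)) = 0 := by
    intro m hm
    rw [← map_zero (PowerSeries.coeff (R := Cinf) m), ← hrel, map_sum, Finset.sum_div,
      map_sum_of_expChar hq hexp]
    refine Finset.sum_congr rfl fun i _ => ?_
    rw [mul_div_assoc, ← coeff_mul_andersonSeries hq hexp hθ (hc i) (u i)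
      ((Finset.le_sup (Finset.mem_univ i)).trans hm)]
    rfl
  have hS : S = 0 := eq_zero_of_eventually_map_div_pow_eq_zero hq2 hexp hα0 hθ1
    (eventually_atTop.2 ⟨_, hcoeff⟩)
  exact fun i => eq_zero_of_eval_eq_zero_of_pow_coeff_eq_self hq2 hθ1 (hc i) (hind c hc hS i)
end
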